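/- The group S₃ × C₅ (the direct product of the symmetric group on 3 letters and the cyclic group of order 5), of order 30, is a perfect group: D(S₃ × C₅) = 60 = 2·|S₃ × C₅|. -/

import Mathlib

/-!
If `|G|` and `|H|` are coprime, then for `(a, b) ∈ G × H` some power of `(a, b)` equals `(a, 1)`,
so every subgroup of `G × H` is the product of its two projections. Hence the normal subgroups of
`G × H` are exactly the products `K × L` of normal subgroups, and `D(G × H) = D(G) · D(H)`.
For `S₃ × C₅` this gives `D = 10 · 6 = 60`: a group of prime order `p` has `D = 1 + p`, and the
normal subgroups of `S₃` are `1`, `A₃`, `S₃`, because a normal subgroup containing one transposition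
contains all of them, and the transpositions generate `S₃`.
-/

/-- `D G` is the sum of the orders of all normal subgroups of `G`
(including the trivial subgroup and `G` itself). -/
noncomputable def D (G : Type*) [Group G] : ℕ :=
  ∑ᶠ N ∈ {N : Subgroup G | N.Normal}, Nat.card N

open Equiv Subgroup

theorem finsum_mem_prod_mul {α β R : Type*} [CommSemiring R] {s : Set α} {t : Set β}
    (hs : s.Finite) (ht : t.Finite) (f : α → R) (g : β → R) :
    ∑ᶠ p ∈ s ×ˢ t, f p.1 * g p.2 = (∑ᶠ a ∈ s, f a) * ∑ᶠ b ∈ t, g b := by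
  rw [finsum_mem_eq_finite_toFinset_sum _ (hs.prod ht), finsum_mem_eq_finite_toFinset_sum _ hs,
    finsum_mem_eq_finite_toFinset_sum _ ht, ← Set.Finite.toFinset_prod, Finset.sum_mul_sum,
    Finset.sum_product]

theorem exists_pow_eq_self_and_pow_eq_one_of_coprime {G H : Type*} [Group G] [Group H] [Finite G]
    (h : (Nat.card G).Coprime (Nat.card H)) :
    ∃ k : ℕ, (∀ a : G, a ^ k = a) ∧ ∀ b : H, b ^ k = 1 := by
  obtain ⟨m, -, hm⟩ := Nat.exists_mul_mod_eq_of_coprime 1 h.symm Nat.card_pos.ne'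
  refine ⟨Nat.card H * m, fun a ↦ ?_, fun b ↦ by rw [pow_mul, pow_card_eq_one', one_pow]⟩
  rw [← pow_mod_natCard, hm, pow_mod_natCard, pow_one]

namespace Subgroup

variable {G H : Type*} [Group G] [Group H]

theorem card_prod (K : Subgroup G) (L : Subgroup H) :
    Nat.card (K.prod L) = Nat.card K * Nat.card L := by
  rw [Nat.card_congr (prodEquiv K L).toEquiv, Nat.card_prod]

theorem prod_injective :
    Function.Injective fun p : Subgroup G × Subgroup H ↦ p.1.prod p.2 := by
  rintro ⟨K, L⟩ ⟨K', L'⟩ h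
  have := (Set.prod_eq_prod_iff_of_nonempty ⟨(1, 1), one_mem (K.prod L)⟩).1
    (congrArg SetLike.coe h)
  simpa [SetLike.coe_set_eq] using this

theorem eq_prod_map_fst_snd_of_coprime [Finite G] [Finite H]
    (h : (Nat.card G).Coprime (Nat.card H)) (N : Subgroup (G × H)) :
    N = (N.map (MonoidHom.fst G H)).prod (N.map (MonoidHom.snd G H)) := by
  refine le_antisymm (le_prod_iff.2 ⟨le_rfl, le_rfl⟩) ?_
  rintro ⟨a, b⟩ ⟨⟨⟨a, b'⟩, ha, rfl⟩, ⟨⟨a', b⟩, hb, rfl⟩⟩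
  obtain ⟨k, hkG, hkH⟩ := exists_pow_eq_self_and_pow_eq_one_of_coprime h
  obtain ⟨l, hlH, hlG⟩ := exists_pow_eq_self_and_pow_eq_one_of_coprime h.symm
  have hfst : ((a, 1) : G × H) ∈ N := by simpa [hkG, hkH] using N.pow_mem ha k
  have hsnd : ((1, b) : G × H) ∈ N := by simpa [hlG, hlH] using N.pow_mem hb l
  simpa using N.mul_mem hfst hsnd

end Subgroup

theorem D_prod_of_coprime {G H : Type*} [Group G] [Group H] [Finite G] [Finite H]
    (h : (Nat.card G).Coprime (Nat.card H)) : D (G × H) = D G * D H := by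
  have hnormal : {N : Subgroup (G × H) | N.Normal} = (fun p ↦ p.1.prod p.2) ''
      ({K : Subgroup G | K.Normal} ×ˢ {L : Subgroup H | L.Normal}) := by
    ext N
    constructor
    · intro hN
      exact ⟨(N.map (MonoidHom.fst G H), N.map (MonoidHom.snd G H)),
        ⟨hN.map _ Prod.fst_surjective, hN.map _ Prod.snd_surjective⟩,
        (eq_prod_map_fst_snd_of_coprime h N).symm⟩
    · rintro ⟨⟨K, L⟩, ⟨hK, hL⟩, rfl⟩
      exact prod_normal K L (hH := hK) (hK := hL)
  rw [D, D, D, hnormal, finsum_mem_image prod_injective.injOn]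
  simp only [card_prod]
  exact finsum_mem_prod_mul (Set.toFinite _) (Set.toFinite _)
    (fun K : Subgroup G ↦ Nat.card K) fun L : Subgroup H ↦ Nat.card L

theorem D_of_prime_card {G : Type*} [Group G] (hp : (Nat.card G).Prime) :
    D G = 1 + Nat.card G := by
  have : Fact (Nat.card G).Prime := ⟨hp⟩
  have hne : (⊥ : Subgroup G) ≠ ⊤ := fun h ↦ hp.one_lt.ne' (by rw [← card_top, ← h, card_bot])
  have hnormal : {N : Subgroup G | N.Normal} = {⊥, ⊤} := by
    ext N
    refine ⟨fun _ ↦ N.eq_bot_or_eq_top_of_prime_card, ?_⟩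
    rintro (rfl | rfl) <;> simp only [Set.mem_ofPred_eq] <;> infer_instance
  rw [D, hnormal, finsum_mem_pair hne, card_bot, card_top]

namespace Equiv.Perm

theorem eq_top_of_normal_of_isSwap_mem {α : Type*} [DecidableEq α] [Finite α]
    {N : Subgroup (Perm α)} (hN : N.Normal) {σ : Perm α} (hσ : σ.IsSwap) (hσN : σ ∈ N) :
    N = ⊤ := by
  rw [eq_top_iff, ← closure_isSwap, closure_le]
  rintro τ ⟨z, w, hzw, rfl⟩
  obtain ⟨x, y, hxy, rfl⟩ := hσ
  obtain ⟨c, hc⟩ := isConj_iff.1 (isConj_swap hxy hzw)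
  rw [← hc]
  exact hN.conj_mem _ hσN c

theorem isSwap_of_notMem_alternatingGroup_fin_three {σ : Perm (Fin 3)}
    (hσ : σ ∉ alternatingGroup (Fin 3)) : σ.IsSwap := by
  rw [mem_alternatingGroup] at hσ
  rw [← card_support_eq_two]
  revert σ
  decide

theorem card_perm_fin_three : Nat.card (Perm (Fin 3)) = 6 := by
  rw [Nat.card_perm, Nat.card_fin]
  rfl

theorem card_alternatingGroup_fin_three : Nat.card (alternatingGroup (Fin 3)) = 3 := by
  rw [nat_card_alternatingGroup, Nat.card_fin]
  rfl

theorem normal_fin_three {N : Subgroup (Perm (Fin 3))} (hN : N.Normal) :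
    N = ⊥ ∨ N = alternatingGroup (Fin 3) ∨ N = ⊤ := by
  by_cases hA : N ≤ alternatingGroup (Fin 3)
  · have hdvd := card_dvd_of_le hA
    rw [card_alternatingGroup_fin_three] at hdvd
    rcases (Nat.dvd_prime Nat.prime_three).1 hdvd with h | h
    · exact .inl (card_eq_one.1 h)
    · exact .inr (.inl (eq_of_le_of_card_ge hA (by rw [h, card_alternatingGroup_fin_three])))
  · obtain ⟨σ, hσN, hσA⟩ := SetLike.not_le_iff_exists.1 hA
    exact .inr (.inr (eq_top_of_normal_of_isSwap_mem hN
      (isSwap_of_notMem_alternatingGroup_fin_three hσA) hσN))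

end Equiv.Perm

theorem D_perm_fin_three : D (Perm (Fin 3)) = 10 := by
  have hnormal : {N : Subgroup (Perm (Fin 3)) | N.Normal} = {⊥, alternatingGroup (Fin 3), ⊤} := by
    ext N
    refine ⟨fun hN ↦ Perm.normal_fin_three hN, ?_⟩
    rintro (rfl | rfl | rfl) <;> simp only [Set.mem_ofPred_eq] <;> infer_instance
  have hA : Nat.card (alternatingGroup (Fin 3)) = 3 := Perm.card_alternatingGroup_fin_three
  have hS : Nat.card (Perm (Fin 3)) = 6 := Perm.card_perm_fin_three
  have ne_of_card_ne {K L : Subgroup (Perm (Fin 3))} (h : Nat.card K ≠ Nat.card L) : K ≠ L :=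
    fun e ↦ h (e ▸ rfl)
  have hbot : (⊥ : Subgroup (Perm (Fin 3))) ∉ ({alternatingGroup (Fin 3), ⊤} : Set _) := by
    simp only [Set.mem_insert_iff, Set.mem_singleton_iff, not_or]
    exact ⟨ne_of_card_ne (by rw [card_bot, hA]; decide),
      ne_of_card_ne (by rw [card_bot, card_top, hS]; decide)⟩
  have halt : alternatingGroup (Fin 3) ≠ ⊤ := ne_of_card_ne (by rw [hA, card_top, hS]; decide)
  rw [D, hnormal, finsum_mem_insert _ hbot (Set.toFinite _), finsum_mem_pair halt, card_bot, hA,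
    card_top, hS]
  rfl

/-- The group `S₃ × C₅`, of order 30, is a perfect group: `D(S₃ × C₅) = 60 = 2·30`. -/
theorem stmt_9 :
    D (Equiv.Perm (Fin 3) × Multiplicative (ZMod 5)) = 60 ∧
      Nat.card (Equiv.Perm (Fin 3) × Multiplicative (ZMod 5)) = 30 := by
  have hS₃ : Nat.card (Perm (Fin 3)) = 6 := Perm.card_perm_fin_three
  have hC₅ : Nat.card (Multiplicative (ZMod 5)) = 5 := by simp
  refine ⟨?_, by rw [Nat.card_prod, hS₃, hC₅]⟩
  rw [D_prod_of_coprime (by rw [hS₃, hC₅]; decide), D_perm_fin_three,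
    D_of_prime_card (by rw [hC₅]; exact Nat.prime_five), hC₅]
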